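/- Let ω = exp(2πi/3). For every α ∈ ℂ and every n ∈ ℕ, writing x = h_0(α), y = h_1(α), z = h_2(α), the Tchebycheff 3-polynomial of the zero-th kind has the explicit form h_0(n·α) = Σ_{k=0}^{n} Σ_{i=0}^{n−k} C(n,k) · C(n−k,i) · δ₃(i,k) · x^{n−k−i} · y^{i} · z^{k}, where C(·,·) are binomial coefficients and δ₃(i,k) = 1 if i ≡ k (mod 3) and δ₃(i,k) = 0 otherwise. -/

import Mathlib

open Complex Finset

/-- `ω = exp(2πi/3)`, the primitive cube root of unity. -/
noncomputable def om3 : ℂ := Complex.exp (2 * Real.pi * Complex.I / 3)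

/-- The third-order hyperbolic function
`h_k(z) = (1/3) · Σ_{s=0}^{2} ω^{−k·s} · exp(ω^s · z)`. -/
noncomputable def hfun3 (k : ℕ) (z : ℂ) : ℂ :=
  (1 / (3 : ℂ)) * ∑ s ∈ Finset.range 3, om3 ^ (-((k * s : ℕ) : ℤ)) * Complex.exp (om3 ^ s * z)

/-! Inverting the discrete Fourier transform that defines `h_k` gives
`exp (ω^s α) = x + ω^s y + ω^(2s) z`, so `h_0 (n α)`, the average over `s` of
`exp (ω^s α)^n`, is the average of `(x + ω^s y + ω^(2s) z)^n`. In the trinomial expansion the monomial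
`x^(n-k-i) y^i z^k` carries the factor `ω^(s(i+2k))`, whose average over `s` is `1` when
`i + 2k ≡ 0`, i.e. `i ≡ k (mod 3)`, and `0` otherwise. -/

theorem add_add_pow {R : Type*} [CommSemiring R] (x y z : R) (n : ℕ) :
    (x + y + z) ^ n = ∑ k ∈ range (n + 1), ∑ i ∈ range (n - k + 1),
      (n.choose k : R) * ((n - k).choose i : R) * x ^ (n - k - i) * y ^ i * z ^ k := by
  rw [add_comm, add_pow, Finset.sum_congr rfl]
  intro k _
  rw [add_comm, add_pow, Finset.mul_sum, Finset.sum_mul, Finset.sum_congr rfl]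
  intro i _
  ring

namespace IsPrimitiveRoot

variable {R : Type*} [CommRing R] [IsDomain R] {ζ : R} {n : ℕ}

theorem sum_pow_pow_eq_ite (hζ : IsPrimitiveRoot ζ n) (m : ℕ) :
    ∑ s ∈ range n, (ζ ^ m) ^ s = if n ∣ m then (n : R) else 0 := by
  split_ifs with hdvd
  · simp [(hζ.pow_eq_one_iff_dvd m).mpr hdvd]
  · have hne : 1 - ζ ^ m ≠ 0 :=
      sub_ne_zero.mpr fun h => hdvd ((hζ.pow_eq_one_iff_dvd m).mp h.symm)
    refine (mul_eq_zero.mp ?_).resolve_left hne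
    rw [mul_neg_geom_sum, ← pow_mul, mul_comm, pow_mul, hζ.pow_eq_one, one_pow, sub_self]

theorem sum_add_pow_mul_add_pow_mul_pow (hζ : IsPrimitiveRoot ζ 3) (x y z : R) (n : ℕ) :
    ∑ s ∈ range 3, (x + ζ ^ s * y + ζ ^ (2 * s) * z) ^ n =
      3 * ∑ k ∈ range (n + 1), ∑ i ∈ range (n - k + 1),
        (n.choose k : R) * ((n - k).choose i : R) * (if i % 3 = k % 3 then 1 else 0) *
          x ^ (n - k - i) * y ^ i * z ^ k := by
  simp_rw [add_add_pow, Finset.mul_sum]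
  rw [Finset.sum_comm]
  refine Finset.sum_congr rfl fun k _ => ?_
  rw [Finset.sum_comm]
  refine Finset.sum_congr rfl fun i _ => ?_
  have hδ : (i % 3 = k % 3) ↔ 3 ∣ i + 2 * k := by omega
  calc ∑ s ∈ range 3, (n.choose k : R) * ((n - k).choose i : R) * x ^ (n - k - i)
          * (ζ ^ s * y) ^ i * (ζ ^ (2 * s) * z) ^ k
      = (n.choose k : R) * ((n - k).choose i : R) * x ^ (n - k - i) * y ^ i * z ^ k
          * ∑ s ∈ range 3, (ζ ^ (i + 2 * k)) ^ s := by
        rw [Finset.mul_sum]; refine Finset.sum_congr rfl fun s _ => ?_; ring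
    _ = _ := by
        rw [hζ.sum_pow_pow_eq_ite]; simp only [hδ]; split_ifs <;> push_cast <;> ring

end IsPrimitiveRoot

theorem isPrimitiveRoot_om3 : IsPrimitiveRoot om3 3 := by
  simpa [om3] using Complex.isPrimitiveRoot_exp 3 (by norm_num)

theorem hfun3_eq_sum (k : ℕ) (z : ℂ) :
    hfun3 k z = 1 / 3 * ∑ s ∈ range 3, (om3 ^ (2 * k)) ^ s * exp (om3 ^ s * z) := by
  have hinv (m : ℕ) : om3 ^ (-(m : ℤ)) = om3 ^ (2 * m) := by
    rw [zpow_neg, zpow_natCast, inv_eq_of_mul_eq_one_left]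
    rw [← pow_add, show 2 * m + m = 3 * m by ring, pow_mul, isPrimitiveRoot_om3.pow_eq_one,
      one_pow]
  simp_rw [hfun3, hinv, ← pow_mul, mul_assoc]

theorem exp_om3_pow_mul (t : ℕ) (z : ℂ) :
    exp (om3 ^ t * z) = hfun3 0 z + om3 ^ t * hfun3 1 z + om3 ^ (2 * t) * hfun3 2 z := by
  have horth (s : ℕ) (hs : s ∈ range 3) :
      ∑ k ∈ range 3, (om3 ^ t) ^ k * (om3 ^ (2 * k)) ^ s = if s = t % 3 then 3 else 0 := by
    have hδ : 3 ∣ t + 2 * s ↔ s = t % 3 := by rw [mem_range] at hs; omega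
    simp only [← hδ]
    rw [show (3 : ℂ) = ((3 : ℕ) : ℂ) by norm_num, ← isPrimitiveRoot_om3.sum_pow_pow_eq_ite]
    exact Finset.sum_congr rfl fun k _ => by ring
  calc exp (om3 ^ t * z)
      = 1 / 3 * ∑ s ∈ range 3, (if s = t % 3 then 3 else 0) * exp (om3 ^ s * z) := by
        simp_rw [ite_mul, zero_mul, Finset.sum_ite_eq', mem_range, Nat.mod_lt t three_pos, if_true]
        rw [isPrimitiveRoot_om3.eq_orderOf, pow_mod_orderOf]
        ring
    _ = ∑ k ∈ range 3, (om3 ^ t) ^ k * hfun3 k z := by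
        simp_rw [hfun3_eq_sum, Finset.mul_sum]
        rw [Finset.sum_comm]
        refine Finset.sum_congr rfl fun s hs => ?_
        rw [← horth s hs, Finset.sum_mul, Finset.mul_sum]
        exact Finset.sum_congr rfl fun k _ => by ring
    _ = hfun3 0 z + om3 ^ t * hfun3 1 z + om3 ^ (2 * t) * hfun3 2 z := by
        simp only [Finset.sum_range_succ, Finset.sum_range_zero]
        ring

/-- Explicit form of the Tchebycheff 3-polynomial of the zero-th kind:
`h_0(nα) = Σ_{k=0}^{n} Σ_{i=0}^{n−k} C(n,k)·C(n−k,i)·δ₃(i,k)·x^{n−k−i}·yⁱ·zᵏ`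
with `x = h_0(α)`, `y = h_1(α)`, `z = h_2(α)` and `δ₃(i,k) = 1` iff `i ≡ k (mod 3)`. -/
theorem tchebycheff_explicit_form (α : ℂ) (n : ℕ) :
    hfun3 0 ((n : ℂ) * α) =
      ∑ k ∈ Finset.range (n + 1), ∑ i ∈ Finset.range (n - k + 1),
        (n.choose k : ℂ) * ((n - k).choose i : ℂ) * (if i % 3 = k % 3 then 1 else 0) *
          hfun3 0 α ^ (n - k - i) * hfun3 1 α ^ i * hfun3 2 α ^ k := by
  calc hfun3 0 ((n : ℂ) * α)
      = 1 / 3 * ∑ s ∈ range 3, exp (om3 ^ s * α) ^ n := by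
        simp_rw [hfun3_eq_sum, mul_zero, pow_zero, one_pow, one_mul, ← exp_nat_mul, mul_left_comm]
    _ = 1 / 3 * ∑ s ∈ range 3,
          (hfun3 0 α + om3 ^ s * hfun3 1 α + om3 ^ (2 * s) * hfun3 2 α) ^ n := by
        simp_rw [exp_om3_pow_mul]
    _ = _ := by
        rw [isPrimitiveRoot_om3.sum_add_pow_mul_add_pow_mul_pow]
        ring
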